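/- arXiv:1909.01813 — 5 statements merged into one kernel-verified Lean document; each statement's English description precedes it below -/
import Mathlib

section
/- Let Θ_HB = {θ : θ_i,min ≤ θ_i ≤ θ_i,max} be a nonempty hyperbox contained in a hypercube Θ_prev = c_prev ⊕ η_prev·B_p, and set η = max_i (θ_i,max − θ_i,min) and m_i = (θ_i,min + θ_i,max)/2. Let c be the Euclidean (equivalently, coordinatewise) projection of m onto c_prev ⊕ (η_prev − η)·B_p. Then Θ_HB ⊆ c ⊕ η·B_p ⊆ Θ_prev. -/
/-- Lemma 1, correctness of Algorithm 1: given a nonempty hyperbox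
contained in the previous hypercube, the hypercube with side `η = max_i (θmax i - θmin i)`
centered at the projection `c` of the midpoint `m` onto `cprev ⊕ (ηprev - η)·B_p`
(coordinatewise clipping) contains the hyperbox and is contained in the previous hypercube. -/
theorem moving_window_hypercube_update {p : ℕ}
    (θmin θmax : Fin p → ℝ) (hbox : ∀ i, θmin i ≤ θmax i)
    (cprev : Fin p → ℝ) (ηprev : ℝ)
    (hsub : {θ : Fin p → ℝ | ∀ i, θmin i ≤ θ i ∧ θ i ≤ θmax i} ⊆
      {θ : Fin p → ℝ | ∀ i, |θ i - cprev i| ≤ ηprev / 2})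
    (η : ℝ) (hη : IsGreatest (Set.range fun i => θmax i - θmin i) η)
    (m : Fin p → ℝ) (hm : ∀ i, m i = (θmin i + θmax i) / 2)
    (c : Fin p → ℝ)
    (hc : ∀ i, c i = max (cprev i - (ηprev - η) / 2)
      (min (m i) (cprev i + (ηprev - η) / 2))) :
    {θ : Fin p → ℝ | ∀ i, θmin i ≤ θ i ∧ θ i ≤ θmax i} ⊆
        {θ : Fin p → ℝ | ∀ i, |θ i - c i| ≤ η / 2} ∧
      {θ : Fin p → ℝ | ∀ i, |θ i - c i| ≤ η / 2} ⊆
        {θ : Fin p → ℝ | ∀ i, |θ i - cprev i| ≤ ηprev / 2} := by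
  obtain ⟨⟨i0, hi0⟩, hub⟩ := hη
  have hmin : ∀ i, |θmin i - cprev i| ≤ ηprev / 2 :=
    hsub (fun i => ⟨le_refl _, hbox i⟩)
  have hmax : ∀ i, |θmax i - cprev i| ≤ ηprev / 2 :=
    hsub (fun i => ⟨hbox i, le_refl _⟩)
  have hηle : η ≤ ηprev := by
    have h1 := abs_le.1 (hmin i0)
    have h2 := abs_le.1 (hmax i0)
    simp only at hi0
    linarith [h1.1, h2.2]
  constructor
  · intro θ hθ i
    have h1 := abs_le.1 (hmin i)
    have h2 := abs_le.1 (hmax i)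
    have hd : θmax i - θmin i ≤ η := hub ⟨i, rfl⟩
    obtain ⟨hθ1, hθ2⟩ := hθ i
    rw [Set.mem_setOf_eq] at *
    rw [abs_le]
    rcases le_total (m i) (cprev i - (ηprev - η) / 2) with h | h
    · have hce : c i = cprev i - (ηprev - η) / 2 := by
        rw [hc i]; exact max_eq_left (le_trans (min_le_left _ _) h)
      rw [hm i] at h
      constructor <;> (rw [hce]; linarith)
    · rcases le_total (cprev i + (ηprev - η) / 2) (m i) with h' | h'
      · have hce : c i = cprev i + (ηprev - η) / 2 := by
          rw [hc i, min_eq_right h']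
          exact max_eq_right (by linarith)
        rw [hm i] at h'
        constructor <;> (rw [hce]; linarith)
      · have hce : c i = m i := by
          rw [hc i, min_eq_left h']
          exact max_eq_right h
        rw [hm i] at hce
        constructor <;> (rw [hce]; linarith)
  · intro θ hθ i
    have h1 : cprev i - (ηprev - η) / 2 ≤ c i := by
      rw [hc i]; exact le_max_left _ _
    have h2 : c i ≤ cprev i + (ηprev - η) / 2 := by
      rw [hc i]; exact max_le (by linarith) (min_le_right _ _)
    have h3 := abs_le.1 (hθ i)
    rw [abs_le]
    constructor <;> linarith [h3.1, h3.2]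
end

section
/- With the setup of the previous statement (compact polytope P with rows H_i, feedback K, D(x,u) affine in (x,u), constant L_B, vertices ẽ_l of B_p), define w_η(z,v) = η · max_{i,l} H_i D(z,v) ẽ_l. Then for all x, z ∈ ℝ^n, v ∈ ℝ^m, η ≥ 0: w_η(x, v + K(x − z)) ≤ w_η(z, v) + η · L_B · max_i H_i (x − z). -/
open Matrix

noncomputable section

/-- The `2^p` vertices of the unit hypercube `B_p = {θ | ‖θ‖_∞ ≤ 1/2}`. -/
def vertexSet (p : ℕ) : Set (Fin p → ℝ) := {e | ∀ i, e i = 1 / 2 ∨ e i = -(1 / 2)}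

/-- Affine parametrization `A(θ) = A₀ + Σ_i θ_i A_i`. -/
def Amat {n p : ℕ} (A0 : Matrix (Fin n) (Fin n) ℝ) (A : Fin p → Matrix (Fin n) (Fin n) ℝ)
    (θ : Fin p → ℝ) : Matrix (Fin n) (Fin n) ℝ := A0 + ∑ i, θ i • A i

/-- Affine parametrization `B(θ) = B₀ + Σ_i θ_i B_i`. -/
def Bmat {n m p : ℕ} (B0 : Matrix (Fin n) (Fin m) ℝ) (B : Fin p → Matrix (Fin n) (Fin m) ℝ)
    (θ : Fin p → ℝ) : Matrix (Fin n) (Fin m) ℝ := B0 + ∑ i, θ i • B i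

/-- `D(x,u) = [A₁x + B₁u, …, A_p x + B_p u]`. -/
def Dmat {n m p : ℕ} (A : Fin p → Matrix (Fin n) (Fin n) ℝ)
    (B : Fin p → Matrix (Fin n) (Fin m) ℝ) (x : Fin n → ℝ) (u : Fin m → ℝ) :
    Matrix (Fin n) (Fin p) ℝ := Matrix.of fun i j => (A j *ᵥ x + B j *ᵥ u) i

/-- Contraction rate `ρ_M = max_i max_{x ∈ P} H_i M x`. -/
def rho {n r : ℕ} (H : Fin r → (Fin n → ℝ)) (P : Set (Fin n → ℝ))
    (M : Matrix (Fin n) (Fin n) ℝ) : ℝ :=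
  sSup {y | ∃ i, ∃ x ∈ P, y = H i ⬝ᵥ (M *ᵥ x)}

/-- `L_B = max_{i,l} max_{x ∈ P} H_i D(x, Kx) ẽ_l`. -/
def LB {n m p r : ℕ} (H : Fin r → (Fin n → ℝ)) (P : Set (Fin n → ℝ))
    (A : Fin p → Matrix (Fin n) (Fin n) ℝ) (B : Fin p → Matrix (Fin n) (Fin m) ℝ)
    (K : Matrix (Fin m) (Fin n) ℝ) : ℝ :=
  sSup {y | ∃ i, ∃ e ∈ vertexSet p, ∃ x ∈ P, y = H i ⬝ᵥ (Dmat A B x (K *ᵥ x) *ᵥ e)}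

/-- `w_η(z,v) = η · max_{i,l} H_i D(z,v) ẽ_l`. -/
def wfun {n m p r : ℕ} (H : Fin r → (Fin n → ℝ))
    (A : Fin p → Matrix (Fin n) (Fin n) ℝ) (B : Fin p → Matrix (Fin n) (Fin m) ℝ)
    (η : ℝ) (z : Fin n → ℝ) (v : Fin m → ℝ) : ℝ :=
  η * sSup {y | ∃ i, ∃ e ∈ vertexSet p, y = H i ⬝ᵥ (Dmat A B z v *ᵥ e)}


section Aux

variable {n m p r : ℕ}

lemma vertexSet_nonempty (p : ℕ) : (vertexSet p).Nonempty :=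
  ⟨fun _ => 1/2, fun _ => Or.inl rfl⟩

lemma vertexSet_finite (p : ℕ) : (vertexSet p).Finite := by
  have : vertexSet p ⊆ Set.pi Set.univ (fun _ : Fin p => ({1/2, -(1/2)} : Set ℝ)) := by
    intro e he i _
    rcases he i with h | h
    · exact Or.inl h
    · exact Or.inr h
  exact Set.Finite.subset (Set.Finite.pi (fun _ => (Set.toFinite _))) this

lemma Dmat_add (A : Fin p → Matrix (Fin n) (Fin n) ℝ) (B : Fin p → Matrix (Fin n) (Fin m) ℝ)
    (x y : Fin n → ℝ) (u w : Fin m → ℝ) :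
    Dmat A B (x + y) (u + w) = Dmat A B x u + Dmat A B y w := by
  ext i j
  simp [Dmat, Matrix.mulVec_add]
  ring

lemma Dmat_smul (A : Fin p → Matrix (Fin n) (Fin n) ℝ) (B : Fin p → Matrix (Fin n) (Fin m) ℝ)
    (c : ℝ) (x : Fin n → ℝ) (u : Fin m → ℝ) :
    Dmat A B (c • x) (c • u) = c • Dmat A B x u := by
  ext i j
  simp [Dmat, Matrix.mulVec_smul]
  ring

/-- The linear map `x ↦ H_i D(x, Kx) e`. -/
def phiMap (A : Fin p → Matrix (Fin n) (Fin n) ℝ) (B : Fin p → Matrix (Fin n) (Fin m) ℝ)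
    (K : Matrix (Fin m) (Fin n) ℝ) (H : Fin r → (Fin n → ℝ)) (i : Fin r) (e : Fin p → ℝ) :
    (Fin n → ℝ) →ₗ[ℝ] ℝ where
  toFun x := H i ⬝ᵥ (Dmat A B x (K *ᵥ x) *ᵥ e)
  map_add' x y := by
    rw [Matrix.mulVec_add, Dmat_add, Matrix.add_mulVec, dotProduct_add]
  map_smul' c x := by
    rw [Matrix.mulVec_smul, Dmat_smul, Matrix.smul_mulVec, dotProduct_smul]
    rfl

lemma LB_bddAbove (A : Fin p → Matrix (Fin n) (Fin n) ℝ) (B : Fin p → Matrix (Fin n) (Fin m) ℝ)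
    (K : Matrix (Fin m) (Fin n) ℝ) (H : Fin r → (Fin n → ℝ)) (P : Set (Fin n → ℝ))
    (hPc : IsCompact P) :
    BddAbove {y | ∃ i, ∃ e ∈ vertexSet p, ∃ x ∈ P, y = H i ⬝ᵥ (Dmat A B x (K *ᵥ x) *ᵥ e)} := by
  have hsub : {y | ∃ i, ∃ e ∈ vertexSet p, ∃ x ∈ P, y = H i ⬝ᵥ (Dmat A B x (K *ᵥ x) *ᵥ e)}
      ⊆ ⋃ q ∈ (Set.univ ×ˢ vertexSet p : Set (Fin r × (Fin p → ℝ))),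
        (phiMap A B K H q.1 q.2) '' P := by
    rintro y ⟨i, e, he, x, hx, rfl⟩
    exact Set.mem_biUnion (by exact ⟨Set.mem_univ i, he⟩ : ((i, e) : Fin r × (Fin p → ℝ)) ∈ _)
      ⟨x, hx, rfl⟩
  refine BddAbove.mono hsub ?_
  rw [Set.Finite.bddAbove_biUnion (Set.finite_univ.prod (vertexSet_finite p))]
  intro q _
  exact (hPc.image (phiMap A B K H q.1 q.2).continuous_of_finiteDimensional).bddAbove

lemma wset_finite (A : Fin p → Matrix (Fin n) (Fin n) ℝ) (B : Fin p → Matrix (Fin n) (Fin m) ℝ)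
    (H : Fin r → (Fin n → ℝ)) (z : Fin n → ℝ) (v : Fin m → ℝ) :
    {y | ∃ i, ∃ e ∈ vertexSet p, y = H i ⬝ᵥ (Dmat A B z v *ᵥ e)}.Finite := by
  have hsub : {y | ∃ i, ∃ e ∈ vertexSet p, y = H i ⬝ᵥ (Dmat A B z v *ᵥ e)}
      ⊆ (fun q : Fin r × (Fin p → ℝ) => H q.1 ⬝ᵥ (Dmat A B z v *ᵥ q.2)) ''
        (Set.univ ×ˢ vertexSet p) := by
    rintro y ⟨i, e, he, rfl⟩
    exact ⟨(i, e), ⟨Set.mem_univ i, he⟩, rfl⟩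
  exact Set.Finite.subset ((Set.finite_univ.prod (vertexSet_finite p)).image _) hsub

/-- Key pointwise estimate: `H_i D(d, Kd) e ≤ L_B · max_j H_j d`. -/
lemma key_estimate [NeZero r]
    (A : Fin p → Matrix (Fin n) (Fin n) ℝ) (B : Fin p → Matrix (Fin n) (Fin m) ℝ)
    (K : Matrix (Fin m) (Fin n) ℝ) (H : Fin r → (Fin n → ℝ))
    (P : Set (Fin n → ℝ)) (hP : P = {x | ∀ i, H i ⬝ᵥ x ≤ 1})
    (hPc : IsCompact P)
    (d : Fin n → ℝ) (i : Fin r) (e : Fin p → ℝ) (he : e ∈ vertexSet p) :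
    H i ⬝ᵥ (Dmat A B d (K *ᵥ d) *ᵥ e) ≤
      LB H P A B K * (Finset.univ.sup' Finset.univ_nonempty fun j => H j ⬝ᵥ d) := by
  set c : ℝ := Finset.univ.sup' Finset.univ_nonempty fun j => H j ⬝ᵥ d with hc
  have hle : ∀ j, H j ⬝ᵥ d ≤ c := by
    intro j
    rw [hc]
    exact Finset.le_sup' (fun j => H j ⬝ᵥ d) (Finset.mem_univ j)
  rcases lt_or_ge 0 c with hcpos | hcnp
  · -- scale d into P
    have hyP : c⁻¹ • d ∈ P := by
      rw [hP]
      intro j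
      have := hle j
      rw [dotProduct_smul, smul_eq_mul]
      calc c⁻¹ * (H j ⬝ᵥ d) ≤ c⁻¹ * c :=
            mul_le_mul_of_nonneg_left (hle j) (inv_nonneg.mpr hcpos.le)
        _ = 1 := inv_mul_cancel₀ hcpos.ne'
    have hmem : c⁻¹ * (H i ⬝ᵥ (Dmat A B d (K *ᵥ d) *ᵥ e)) ∈
        {y | ∃ i, ∃ e ∈ vertexSet p, ∃ x ∈ P, y = H i ⬝ᵥ (Dmat A B x (K *ᵥ x) *ᵥ e)} := by
      refine ⟨i, e, he, c⁻¹ • d, hyP, ?_⟩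
      rw [Matrix.mulVec_smul, Dmat_smul, Matrix.smul_mulVec, dotProduct_smul, smul_eq_mul]
    have hsup : c⁻¹ * (H i ⬝ᵥ (Dmat A B d (K *ᵥ d) *ᵥ e)) ≤ LB H P A B K :=
      le_csSup (LB_bddAbove A B K H P hPc) hmem
    have := mul_le_mul_of_nonneg_left hsup hcpos.le
    rw [← mul_assoc, mul_inv_cancel₀ hcpos.ne', one_mul] at this
    linarith [this]
  · -- then d = 0
    have hd0 : d = 0 := by
      by_contra hd
      have hray : ∀ t : ℝ, 0 ≤ t → t • d ∈ P := by
        intro t ht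
        rw [hP]
        intro j
        rw [dotProduct_smul, smul_eq_mul]
        have h1 : H j ⬝ᵥ d ≤ 0 := le_trans (hle j) hcnp
        nlinarith
      obtain ⟨R, hR⟩ := hPc.isBounded.exists_norm_le
      have hdnorm : 0 < ‖d‖ := norm_pos_iff.mpr hd
      have hR0 : 0 ≤ R := le_trans (norm_nonneg _) (hR _ (hray 0 le_rfl))
      have ht : 0 ≤ (R + 1) / ‖d‖ := div_nonneg (by linarith) hdnorm.le
      have := hR _ (hray _ ht)
      rw [norm_smul, Real.norm_eq_abs, abs_of_nonneg ht, div_mul_cancel₀ _ hdnorm.ne'] at this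
      linarith
    subst hd0
    have hDl : Dmat A B (0 : Fin n → ℝ) (K *ᵥ (0 : Fin n → ℝ)) = 0 := by
      ext a b
      simp [Dmat, Matrix.mulVec_zero]
    have hc0 : c = 0 := by
      rw [hc]
      apply le_antisymm
      · exact Finset.sup'_le _ _ fun j _ => by simp
      · exact le_trans (by simp) (Finset.le_sup' _ (Finset.mem_univ (0 : Fin r)))
    rw [hDl, hc0]
    simp

end Aux

/-- Proposition 2: Lipschitz-type bound on the uncertainty function:
`w_η(x, v + K(x-z)) ≤ w_η(z,v) + η·L_B·max_i H_i (x-z)`. -/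
theorem uncertainty_lipschitz_bound {n m p r : ℕ} [NeZero r]
    (A : Fin p → Matrix (Fin n) (Fin n) ℝ) (B : Fin p → Matrix (Fin n) (Fin m) ℝ)
    (K : Matrix (Fin m) (Fin n) ℝ) (H : Fin r → (Fin n → ℝ))
    (P : Set (Fin n → ℝ)) (hP : P = {x | ∀ i, H i ⬝ᵥ x ≤ 1})
    (hPc : IsCompact P) (h0 : (0 : Fin n → ℝ) ∈ interior P)
    (η : ℝ) (hη : 0 ≤ η) :
    ∀ (x z : Fin n → ℝ) (v : Fin m → ℝ),
      wfun H A B η x (v + K *ᵥ (x - z)) ≤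
        wfun H A B η z v +
          η * LB H P A B K *
            (Finset.univ.sup' Finset.univ_nonempty fun i => H i ⬝ᵥ (x - z)) := by
  intro x z v
  obtain ⟨e₀, he₀⟩ := vertexSet_nonempty p
  have hkey : sSup {y | ∃ i, ∃ e ∈ vertexSet p, y = H i ⬝ᵥ (Dmat A B x (v + K *ᵥ (x - z)) *ᵥ e)}
      ≤ sSup {y | ∃ i, ∃ e ∈ vertexSet p, y = H i ⬝ᵥ (Dmat A B z v *ᵥ e)} +
        LB H P A B K * (Finset.univ.sup' Finset.univ_nonempty fun i => H i ⬝ᵥ (x - z)) := by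
    have hne : Set.Nonempty
        {y | ∃ i, ∃ e ∈ vertexSet p, y = H i ⬝ᵥ (Dmat A B x (v + K *ᵥ (x - z)) *ᵥ e)} :=
      ⟨_, ⟨0, e₀, he₀, rfl⟩⟩
    apply csSup_le hne
    rintro y ⟨i, e, he, rfl⟩
    have hsplit : Dmat A B x (v + K *ᵥ (x - z)) =
        Dmat A B z v + Dmat A B (x - z) (K *ᵥ (x - z)) := by
      rw [← Dmat_add]
      congr 1
      ring
    rw [hsplit, Matrix.add_mulVec, dotProduct_add]
    refine add_le_add (le_csSup (wset_finite A B H z v).bddAbove ⟨i, e, he, rfl⟩) ?_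
    exact key_estimate A B K H P hP hPc (x - z) i e he
  unfold wfun
  have h := mul_le_mul_of_nonneg_left hkey hη
  ring_nf at h ⊢
  linarith
end
end

section
/- Terminal set invariance (Proposition 3, constraint part): Let P = {x : H_i x ≤ 1, i=1,…,r} be a compact polytope, c_j = max_{x∈P} (F_j + G_j K) x for j = 1,…,q, c_max = max_j c_j > 0, and X_f = {(x,s) ∈ ℝ^{n+1} : c_max (s + H_i x) ≤ 1 for all i}. Then for every (x,s) ∈ X_f with s ≥ 0, (F_j + G_j K) x + c_j s ≤ 1 for all j = 1,…,q. -/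
open Matrix

/-- A set containing a whole ray `{t • v : t ≥ 0}` with `v ≠ 0` is unbounded. -/
lemma ray_not_bounded {n : ℕ} (v : Fin n → ℝ) (hv : v ≠ 0) (P : Set (Fin n → ℝ))
    (hray : ∀ t : ℝ, 0 ≤ t → t • v ∈ P) : ¬ Bornology.IsBounded P := by
  intro hb
  obtain ⟨C, hC⟩ := isBounded_iff_forall_norm_le.1 hb
  have hvn : 0 < ‖v‖ := norm_pos_iff.2 hv
  set t : ℝ := (|C| + 1) / ‖v‖ with ht
  have ht0 : 0 ≤ t := by positivity
  have := hC _ (hray t ht0)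
  rw [norm_smul, Real.norm_eq_abs, abs_of_nonneg ht0, ht, div_mul_cancel₀ _ (ne_of_gt hvn)] at this
  have : C ≤ |C| := le_abs_self C
  linarith [le_abs_self C, hC _ (hray t ht0)]

/-- Proposition 3, constraint part: with `c_j = max_{x∈P}(F_j + G_jK)x`,
`c_max = max_j c_j > 0`, and the terminal set
`X_f = {(x,s) | c_max (s + H_i x) ≤ 1 ∀i}`, every `(x,s) ∈ X_f` with `s ≥ 0` satisfies
the tightened constraints `(F_j + G_jK)x + c_j s ≤ 1` for all `j`. -/
theorem terminal_set_constraint_satisfaction {n m r q : ℕ}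
    (H : Fin r → (Fin n → ℝ)) (F : Fin q → (Fin n → ℝ)) (G : Fin q → (Fin m → ℝ))
    (K : Matrix (Fin m) (Fin n) ℝ)
    (P : Set (Fin n → ℝ)) (hP : P = {x | ∀ i, H i ⬝ᵥ x ≤ 1})
    (hPc : IsCompact P) (h0 : (0 : Fin n → ℝ) ∈ interior P)
    (c : Fin q → ℝ)
    (hc : ∀ j, IsGreatest ((fun x => F j ⬝ᵥ x + G j ⬝ᵥ (K *ᵥ x)) '' P) (c j))
    (cmax : ℝ) (hcmax : IsGreatest (Set.range c) cmax) (hcmax_pos : 0 < cmax) :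
    ∀ (x : Fin n → ℝ) (s : ℝ), (∀ i, cmax * (s + H i ⬝ᵥ x) ≤ 1) → 0 ≤ s →
      ∀ j, F j ⬝ᵥ x + G j ⬝ᵥ (K *ᵥ x) + c j * s ≤ 1 := by
  intro x s hcon hs j
  have hcj : c j ≤ cmax := hcmax.2 ⟨j, rfl⟩
  set α : ℝ := 1 - cmax * s with hα
  rcases lt_or_ge 0 α with hαpos | hαle
  · -- main case: scale x into P
    set y : Fin n → ℝ := (cmax / α) • x with hy
    have hyP : y ∈ P := by
      rw [hP]
      intro i
      have h1 : cmax * (H i ⬝ᵥ x) ≤ α := by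
        have := hcon i; nlinarith
      have : H i ⬝ᵥ y = (cmax / α) * (H i ⬝ᵥ x) := by
        rw [hy, dotProduct_smul, smul_eq_mul]
      rw [this]
      rw [div_mul_eq_mul_div, mul_comm, div_le_one hαpos, mul_comm]
      exact h1
    have hle : F j ⬝ᵥ y + G j ⬝ᵥ (K *ᵥ y) ≤ c j := (hc j).2 ⟨y, hyP, rfl⟩
    have hFy : F j ⬝ᵥ y = (cmax / α) * (F j ⬝ᵥ x) := by
      rw [hy, dotProduct_smul, smul_eq_mul]
    have hGy : G j ⬝ᵥ (K *ᵥ y) = (cmax / α) * (G j ⬝ᵥ (K *ᵥ x)) := by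
      rw [hy, Matrix.mulVec_smul, dotProduct_smul, smul_eq_mul]
    rw [hFy, hGy, ← mul_add] at hle
    have hfx : F j ⬝ᵥ x + G j ⬝ᵥ (K *ᵥ x) ≤ c j * α / cmax := by
      rw [div_mul_eq_mul_div, mul_comm] at hle
      rw [le_div_iff₀ hcmax_pos]
      calc (F j ⬝ᵥ x + G j ⬝ᵥ (K *ᵥ x)) * cmax
          = ((F j ⬝ᵥ x + G j ⬝ᵥ (K *ᵥ x)) * cmax / α) * α := by
            field_simp
        _ ≤ c j * α := by
            apply mul_le_mul_of_nonneg_right hle (le_of_lt hαpos)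
    have hcdiv : c j / cmax ≤ 1 := (div_le_one hcmax_pos).2 hcj
    have : c j * α / cmax = c j / cmax - c j * s := by
      field_simp [hα]; ring
    nlinarith
  · -- α ≤ 0
    by_cases hx : x = 0
    · subst hx
      simp only [dotProduct_zero, Matrix.mulVec_zero, zero_add]
      rcases isEmpty_or_nonempty (Fin r) with hr | hr
      · -- no state constraints: P = univ
        rcases isEmpty_or_nonempty (Fin n) with hn | hn
        · -- n = 0 : everything is 0, so cmax = 0, contradiction
          exfalso
          have hzero : ∀ j', c j' = 0 := by
            intro j'
            obtain ⟨x₀, _, hx₀⟩ := (hc j').1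
            have hx0 : x₀ = 0 := funext fun i => (hn.false i).elim
            rw [hx0] at hx₀
            simp at hx₀
            linarith [hx₀]
          obtain ⟨j', hj'⟩ := hcmax.1
          rw [hzero j'] at hj'
          linarith
        · -- n > 0 : P = univ is unbounded, contradiction
          exfalso
          have hPuniv : P = Set.univ := by
            rw [hP]; ext z
            simp only [Set.mem_setOf_eq, Set.mem_univ, iff_true]
            exact fun i => (hr.false i).elim
          exact ray_not_bounded (fun _ => 1) (by
            intro h; have := congrFun h hn.some; simp at this) P
            (fun t ht => by rw [hPuniv]; trivial) hPc.isBounded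
      · -- some constraint exists: cmax * s ≤ 1
        have := hcon hr.some
        simp only [dotProduct_zero, add_zero] at this
        calc c j * s ≤ cmax * s := mul_le_mul_of_nonneg_right hcj hs
          _ ≤ 1 := this
    · -- x ≠ 0 : the ray through x lies in P, contradicting compactness
      exfalso
      have hHx : ∀ i, H i ⬝ᵥ x ≤ 0 := by
        intro i
        have := hcon i
        nlinarith
      refine ray_not_bounded x hx P (fun t ht => ?_) hPc.isBounded
      rw [hP]
      intro i
      have : H i ⬝ᵥ (t • x) = t * (H i ⬝ᵥ x) := by
        rw [dotProduct_smul, smul_eq_mul]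
      rw [this]
      nlinarith [hHx i]
end

section
/- One-step polytope containment under contraction: Let ρ = max_i max_{x∈P} H_i A x for a matrix A and compact polytope P = {x : H_i x ≤ 1} with 0 in its interior. Then for every x ∈ ℝ^n, max_i H_i (A x) ≤ ρ · max_i H_i x whenever max_i H_i x ≥ 0; in particular, if x ∈ s·P for s ≥ 0 then A x ∈ ρ s · P. -/
open Matrix

noncomputable section

/-- one-step polytope containment under contraction: with
`ρ = max_i max_{x∈P} H_i A x` for a compact polytope `P = {x | H_i x ≤ 1}` containing
`0` in its interior, `max_i H_i (Ax) ≤ ρ · max_i H_i x` whenever `max_i H_i x ≥ 0`;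
in particular `x ∈ s·P` implies `Ax ∈ ρs·P` for `s ≥ 0`. -/
theorem polytope_contraction {n r : ℕ} [NeZero r]
    (H : Fin r → (Fin n → ℝ)) (M : Matrix (Fin n) (Fin n) ℝ)
    (P : Set (Fin n → ℝ)) (hP : P = {x | ∀ i, H i ⬝ᵥ x ≤ 1})
    (hPc : IsCompact P) (h0 : (0 : Fin n → ℝ) ∈ interior P) :
    (∀ x : Fin n → ℝ,
      0 ≤ (Finset.univ.sup' Finset.univ_nonempty fun i => H i ⬝ᵥ x) →
      (Finset.univ.sup' Finset.univ_nonempty fun i => H i ⬝ᵥ (M *ᵥ x)) ≤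
        rho H P M * (Finset.univ.sup' Finset.univ_nonempty fun i => H i ⬝ᵥ x)) ∧
    (∀ (x : Fin n → ℝ) (s : ℝ), 0 ≤ s → (∀ i, H i ⬝ᵥ x ≤ s) →
      ∀ i, H i ⬝ᵥ (M *ᵥ x) ≤ rho H P M * s) := by
  have h0P : (0 : Fin n → ℝ) ∈ P := interior_subset h0
  set S : Set ℝ := {y | ∃ i, ∃ x ∈ P, y = H i ⬝ᵥ (M *ᵥ x)} with hS
  -- continuity of each linear functional
  have hcont : ∀ i : Fin r, Continuous fun x : Fin n → ℝ => H i ⬝ᵥ (M *ᵥ x) := by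
    intro i
    simp only [dotProduct, Matrix.mulVec]
    fun_prop
  -- S is bounded above
  have hbdd : BddAbove S := by
    have hb : ∀ i : Fin r, ∃ c : ℝ, ∀ x ∈ P, H i ⬝ᵥ (M *ᵥ x) ≤ c := by
      intro i
      have himg : BddAbove ((fun x => H i ⬝ᵥ (M *ᵥ x)) '' P) :=
        (hPc.image (hcont i)).bddAbove
      obtain ⟨c, hc⟩ := himg
      exact ⟨c, fun x hx => hc ⟨x, hx, rfl⟩⟩
    choose c hc using hb
    refine ⟨Finset.univ.sup' Finset.univ_nonempty c, ?_⟩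
    rintro y ⟨i, x, hx, rfl⟩
    exact le_trans (hc i x hx) (Finset.le_sup' c (Finset.mem_univ i))
  -- ρ ≥ 0
  have hρ0 : 0 ≤ rho H P M := by
    have : (0 : ℝ) ∈ S := ⟨⟨0, Nat.pos_of_ne_zero (NeZero.ne r)⟩, 0, h0P, by simp⟩
    exact le_csSup hbdd this
  -- key: membership in P gives bound by ρ
  have hkey : ∀ x ∈ P, ∀ i, H i ⬝ᵥ (M *ᵥ x) ≤ rho H P M := by
    intro x hx i
    exact le_csSup hbdd ⟨i, x, hx, rfl⟩
  -- main helper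
  have main : ∀ (x : Fin n → ℝ) (s : ℝ), 0 ≤ s → (∀ i, H i ⬝ᵥ x ≤ s) →
      ∀ i, H i ⬝ᵥ (M *ᵥ x) ≤ rho H P M * s := by
    intro x s hs hxs i
    rcases eq_or_lt_of_le hs with hs0 | hs0
    · -- s = 0
      rw [← hs0, mul_zero]
      by_contra hpos
      push_neg at hpos
      set a := H i ⬝ᵥ (M *ᵥ x) with ha
      have ht : ∀ t : ℝ, 0 < t → t * a ≤ rho H P M := by
        intro t htp
        have hmem : t • x ∈ P := by
          rw [hP]
          intro j
          have : H j ⬝ᵥ (t • x) = t * (H j ⬝ᵥ x) := by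
            rw [dotProduct_smul, smul_eq_mul]
          rw [this]
          have := hxs j
          nlinarith [this, hs0.le]
        have := hkey (t • x) hmem i
        rw [Matrix.mulVec_smul, dotProduct_smul, smul_eq_mul] at this
        exact this
      have := ht ((rho H P M + 1) / a) (by positivity)
      rw [div_mul_cancel₀ _ (ne_of_gt hpos)] at this
      linarith
    · -- s > 0
      have hmem : s⁻¹ • x ∈ P := by
        rw [hP]
        intro j
        have h1 : H j ⬝ᵥ (s⁻¹ • x) = s⁻¹ * (H j ⬝ᵥ x) := by
          rw [dotProduct_smul, smul_eq_mul]
        rw [h1]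
        rw [inv_mul_le_iff₀ hs0, mul_one]
        exact hxs j
      have := hkey (s⁻¹ • x) hmem i
      rw [Matrix.mulVec_smul, dotProduct_smul, smul_eq_mul,
        inv_mul_le_iff₀ hs0] at this
      linarith [this]
  refine ⟨?_, main⟩
  intro x hm
  set m := Finset.univ.sup' Finset.univ_nonempty fun i => H i ⬝ᵥ x with hmdef
  have hxm : ∀ i, H i ⬝ᵥ x ≤ m := fun i =>
    Finset.le_sup' (fun i => H i ⬝ᵥ x) (Finset.mem_univ i)
  exact Finset.sup'_le _ _ fun i _ => main x m hm hxm i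
end
end

section
/- Nested-tube scalar induction (Theorem 1, Part III): Let ρ, ρ' ≥ 0 and L ≥ 0, η ≥ η' ≥ 0, Δη = η − η', and suppose ρ' ≤ ρ + Δη·L. Given nonnegative scalars s, s', s̃, a, a' satisfying s' + s̃ − s ≤ 0, and w, w' satisfying w' − w + Δη·L·s ≤ η'·L·(s' − s + s̃) − w̃ for some w̃ ≥ 0, define s'⁺ = ρ' s' + w', s̃⁺ = ρ' s̃ + w̃, s⁺ = ρ s + w. Then s'⁺ + s̃⁺ − s⁺ ≤ (ρ + Δη L + η' L)(s' + s̃ − s) ≤ 0. -/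
/-- Theorem 1, Part III, scalar induction step: with
`ρ' ≤ ρ + Δη·L`, `s' + s̃ - s ≤ 0`, and
`w' - w + Δη·L·s ≤ η'·L·(s' - s + s̃) - w̃`, the updated tube sizes
`s'⁺ = ρ's' + w'`, `s̃⁺ = ρ's̃ + w̃`, `s⁺ = ρs + w` satisfy
`s'⁺ + s̃⁺ - s⁺ ≤ (ρ + ΔηL + η'L)(s' + s̃ - s) ≤ 0`. -/
theorem nested_tube_scalar_induction
    (ρ ρ' L η η' Δη s s' stilde w w' wtilde : ℝ)
    (hρ : 0 ≤ ρ) (hρ' : 0 ≤ ρ') (hL : 0 ≤ L)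
    (hη' : 0 ≤ η') (hηη' : η' ≤ η) (hΔη : Δη = η - η')
    (hcontr : ρ' ≤ ρ + Δη * L)
    (hs : 0 ≤ s) (hs' : 0 ≤ s') (hstilde : 0 ≤ stilde)
    (hwtilde : 0 ≤ wtilde)
    (hind : s' + stilde - s ≤ 0)
    (hw : w' - w + Δη * L * s ≤ η' * L * (s' - s + stilde) - wtilde) :
    ρ' * s' + w' + (ρ' * stilde + wtilde) - (ρ * s + w) ≤
        (ρ + Δη * L + η' * L) * (s' + stilde - s) ∧
      (ρ + Δη * L + η' * L) * (s' + stilde - s) ≤ 0 := by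
  constructor
  · nlinarith [mul_nonneg (add_nonneg hs' hstilde) (sub_nonneg.2 hcontr), mul_nonneg (mul_nonneg hη' hL) hs]
  · have h1 : 0 ≤ ρ + Δη * L + η' * L := by nlinarith [mul_nonneg (sub_nonneg.2 hηη') hL, mul_nonneg hη' hL]
    exact mul_nonpos_of_nonneg_of_nonpos h1 hind
end
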